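/- Let K_1, K_2 ⊆ ℝ^d be ℝ-cones and let A ∈ M_d(ℝ) be such that A(K_1 ∖ {0}) ⊆ (int K_2) ∪ (−int K_2). Then A(K_1^ℂ ∖ {0}) ⊆ int(K_2^ℂ). -/

import Mathlib

open scoped BigOperators Pointwise

noncomputable section

/-- The Euclidean norm of a finitely-indexed vector (real or complex entries). -/
def enorm {ι : Type*} [Fintype ι] {E : Type*} [Norm E] (u : ι → E) : ℝ :=
  Real.sqrt (∑ i, ‖u i‖ ^ 2)

/-- The operator norm of a real matrix induced by the Euclidean norm. -/
def opNorm {ι : Type*} [Fintype ι] (A : Matrix ι ι ℝ) : ℝ :=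
  sSup ((fun u : ι → ℝ => _root_.enorm (A.mulVec u)) '' {u : ι → ℝ | _root_.enorm u = 1})

/-- A multicone for a set of matrices (Definition 1.2). -/
def IsMulticone {ι : Type*} [Fintype ι] (S : Set (Matrix ι ι ℝ)) {m : ℕ}
    (K : Fin m → Set (ι → ℝ)) (w : ι → ℝ) : Prop :=
  (∀ j, IsClosed (K j)) ∧ (∀ j, Convex ℝ (K j)) ∧ (∀ j, (interior (K j)).Nonempty) ∧
  (∀ j, ∀ c : ℝ, 0 ≤ c → ∀ u ∈ K j, c • u ∈ K j) ∧
  (∑ i, w i ^ 2 = 1) ∧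
  (∀ u ∈ ⋃ j, K j, u ≠ 0 → 0 < ∑ i, u i * w i) ∧
  (∀ A ∈ S, ∀ j, ∃ ℓ, ∀ u ∈ K j, u ≠ 0 →
    A.mulVec u ∈ interior (K ℓ) ∨ -A.mulVec u ∈ interior (K ℓ)) ∧
  (∀ j₁ j₂, j₁ ≠ j₂ → K j₁ ∩ K j₂ = {0})

/-- The set of matrices is multipositive if it admits a multicone. -/
def IsMultipositive {ι : Type*} [Fintype ι] (S : Set (Matrix ι ι ℝ)) : Prop :=
  ∃ (m : ℕ) (_ : 0 < m) (K : Fin m → Set (ι → ℝ)) (w : ι → ℝ), IsMulticone S K w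

/-- The semigroup generated by a set of matrices. -/
def semigroupOf {ι : Type*} [Fintype ι] [DecidableEq ι] (S : Set (Matrix ι ι ℝ)) :
    Set (Matrix ι ι ℝ) :=
  {B | ∃ l : List (Matrix ι ι ℝ), l ≠ [] ∧ (∀ M ∈ l, M ∈ S) ∧ B = l.prod}

/-- The complexification of a set in ℝ^ι. -/
def complexify {ι : Type*} (K : Set (ι → ℝ)) : Set (ι → ℂ) :=
  {z | ∃ (c : ℂ) (u v : ι → ℝ), u ∈ K ∧ v ∈ K ∧
    z = fun i => c * (((u i : ℂ) + (v i : ℂ)) + Complex.I * ((u i : ℂ) - (v i : ℂ)))}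

/-- The action of a real matrix on complex vectors. -/
def mulVecC {ι : Type*} [Fintype ι] (A : Matrix ι ι ℝ) (z : ι → ℂ) : ι → ℂ :=
  (A.map (fun x : ℝ => (x : ℂ))).mulVec z

/-- An ℝ-cone: closed, convex, nonempty interior, positively homogeneous, proper. -/
def IsRCone {ι : Type*} [Fintype ι] (K : Set (ι → ℝ)) : Prop :=
  IsClosed K ∧ Convex ℝ K ∧ (interior K).Nonempty ∧
  (∀ c : ℝ, 0 < c → c • K = K) ∧ K ∩ (-K) = {0}

end


/-!
A point of `complexify K` is `c • (u + v + I (u - v))` with `u, v ∈ K`, and `A` acts on it by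
acting on `u` and `v`. The map `(p, q) ↦ p + q + I (p - q)` is a real-linear homeomorphism
`ℝ^ι × ℝ^ι ≃ ℂ^ι`, so it sends `int K × int K` onto an open subset of `complexify K`. Hence it
suffices to write `A z` as a nonzero multiple of such a point with `p, q ∈ int K₂`. Since
`p + q + I (p - q) = I (-q + p + I (-q - p))` and `p + I p = (1 + I)/2 (2p)`, the signs and zeros
of `A u` and `A v` can be absorbed into the complex scalar.
-/

open Complex

namespace Complexify

variable {ι : Type*}

/-- The vector `(p + q) + I (p - q)`, so that `complexify K` consists of the multiples
`c • complexPair u v` with `u, v ∈ K`. -/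
def complexPair (p q : ι → ℝ) : ι → ℂ :=
  fun i => ((p i : ℂ) + q i) + I * ((p i : ℂ) - q i)

noncomputable def realPair (z : ι → ℂ) : (ι → ℝ) × (ι → ℝ) :=
  (fun i => ((z i).re + (z i).im) / 2, fun i => ((z i).re - (z i).im) / 2)

theorem complexPair_realPair (z : ι → ℂ) :
    complexPair (realPair z).1 (realPair z).2 = z := by
  funext i
  apply Complex.ext <;> simp [complexPair, realPair] <;> ring

theorem realPair_complexPair (p q : ι → ℝ) : realPair (complexPair p q) = (p, q) := by
  ext i <;> simp [complexPair, realPair]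

theorem continuous_realPair : Continuous (realPair : (ι → ℂ) → (ι → ℝ) × (ι → ℝ)) :=
  .prodMk (continuous_pi fun _ => by fun_prop) (continuous_pi fun _ => by fun_prop)

theorem complexPair_neg (p q : ι → ℝ) :
    complexPair (-p) (-q) = (-1 : ℂ) • complexPair p q := by
  funext i
  simp only [complexPair, Pi.neg_apply, Pi.smul_apply, smul_eq_mul, ofReal_neg]
  ring

theorem complexPair_eq_I_smul (p q : ι → ℝ) :
    complexPair p q = I • complexPair (-q) p := by
  funext i
  simp only [complexPair, Pi.neg_apply, Pi.smul_apply, smul_eq_mul, ofReal_neg]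
  linear_combination ((p i : ℂ) + q i) * I_sq

theorem complexPair_zero_right (p : ι → ℝ) :
    complexPair p 0 = ((1 + I) / 2) • complexPair p p := by
  funext i
  simp only [complexPair, Pi.zero_apply, Pi.smul_apply, smul_eq_mul, ofReal_zero]
  ring

theorem complexPair_mem_complexify {K : Set (ι → ℝ)} {p q : ι → ℝ} (hp : p ∈ K) (hq : q ∈ K) :
    complexPair p q ∈ complexify K :=
  ⟨1, p, q, hp, hq, by funext i; simp [complexPair]⟩

theorem smul_complexify_subset (K : Set (ι → ℝ)) (c : ℂ) :
    c • complexify K ⊆ complexify K := by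
  rintro _ ⟨_, ⟨c', u, v, hu, hv, rfl⟩, rfl⟩
  exact ⟨c * c', u, v, hu, hv, by funext i; simp [mul_assoc]⟩

theorem smul_mem_interior_complexify {K : Set (ι → ℝ)} {c : ℂ} (hc : c ≠ 0) {z : ι → ℂ}
    (hz : z ∈ interior (complexify K)) : c • z ∈ interior (complexify K) := by
  have : c • z ∈ interior (c • complexify K) := by
    rw [interior_smul₀ hc]
    exact Set.smul_mem_smul_set hz
  exact interior_mono (smul_complexify_subset K c) this

theorem complexPair_mem_interior_complexify {K : Set (ι → ℝ)} {p q : ι → ℝ}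
    (hp : p ∈ interior K) (hq : q ∈ interior K) :
    complexPair p q ∈ interior (complexify K) := by
  refine mem_interior.mpr ⟨realPair ⁻¹' (interior K ×ˢ interior K), ?_,
    (isOpen_interior.prod isOpen_interior).preimage continuous_realPair, ?_⟩
  · intro z hz
    rw [← complexPair_realPair z]
    exact complexPair_mem_complexify (interior_subset hz.1) (interior_subset hz.2)
  · simpa [realPair_complexPair] using ⟨hp, hq⟩

theorem complexPair_mem_interior_complexify_of_mem_interior_left {K : Set (ι → ℝ)}
    {p q : ι → ℝ} (hp : p ∈ interior K) (hq : q ∈ interior K ∨ -q ∈ interior K ∨ q = 0) :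
    complexPair p q ∈ interior (complexify K) := by
  rcases hq with hq | hq | rfl
  · exact complexPair_mem_interior_complexify hp hq
  · rw [complexPair_eq_I_smul]
    exact smul_mem_interior_complexify I_ne_zero (complexPair_mem_interior_complexify hq hp)
  · rw [complexPair_zero_right]
    exact smul_mem_interior_complexify (by simp [div_eq_zero_iff, Complex.ext_iff])
      (complexPair_mem_interior_complexify hp hp)

theorem complexPair_mem_interior_complexify_of_signed {K : Set (ι → ℝ)} {p q : ι → ℝ}
    (hp : p ∈ interior K ∨ -p ∈ interior K) (hq : q ∈ interior K ∨ -q ∈ interior K ∨ q = 0) :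
    complexPair p q ∈ interior (complexify K) := by
  rcases hp with hp | hp
  · exact complexPair_mem_interior_complexify_of_mem_interior_left hp hq
  · have hq' : -q ∈ interior K ∨ - -q ∈ interior K ∨ -q = 0 := by
      rw [neg_neg, neg_eq_zero]; tauto
    have := complexPair_mem_interior_complexify_of_mem_interior_left hp hq'
    rw [complexPair_neg] at this
    simpa using smul_mem_interior_complexify (c := -1) (by norm_num) this

end Complexify

open Complexify

theorem mulVecC_smul_complexPair {ι : Type*} [Fintype ι] (A : Matrix ι ι ℝ) (c : ℂ)
    (u v : ι → ℝ) :
    mulVecC A (c • complexPair u v) = c • complexPair (A.mulVec u) (A.mulVec v) := by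
  have hcast (w : ι → ℝ) (i : ι) : (A.mulVec w i : ℂ) = (A.map (↑)).mulVec (fun j => (w j : ℂ)) i :=
    RingHom.map_mulVec ofRealHom A w i
  have hpair : complexPair u v =
      (1 + I) • (fun j => (u j : ℂ)) + (1 - I) • (fun j => (v j : ℂ)) := by
    funext j
    simp only [complexPair, Pi.add_apply, Pi.smul_apply, smul_eq_mul]
    ring
  funext i
  simp only [mulVecC, Matrix.mulVec_smul, hpair, Matrix.mulVec_add, Pi.smul_apply, Pi.add_apply,
    smul_eq_mul, complexPair, hcast]
  ring

theorem stmt14_general {d : ℕ} (K₁ K₂ : Set (Fin d → ℝ))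
    (A : Matrix (Fin d) (Fin d) ℝ)
    (hA : ∀ u ∈ K₁, u ≠ 0 → A.mulVec u ∈ interior K₂ ∨ -A.mulVec u ∈ interior K₂) :
    ∀ z ∈ complexify K₁, z ≠ 0 → mulVecC A z ∈ interior (complexify K₂) := by
  rintro _ ⟨c, u, v, hu, hv, rfl⟩ hz
  change c • complexPair u v ≠ 0 at hz
  change mulVecC A (c • complexPair u v) ∈ _
  have hc : c ≠ 0 := by rintro rfl; simp at hz
  rw [mulVecC_smul_complexPair]
  refine smul_mem_interior_complexify hc ?_
  by_cases hu0 : u = 0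
  · have hv0 : v ≠ 0 := by rintro rfl; subst hu0; exact hz (by funext i; simp [complexPair])
    rw [hu0, Matrix.mulVec_zero, complexPair_eq_I_smul]
    refine smul_mem_interior_complexify I_ne_zero
      (complexPair_mem_interior_complexify_of_signed ?_ (Or.inr (Or.inr rfl)))
    rw [neg_neg]
    exact (hA v hv hv0).symm
  · refine complexPair_mem_interior_complexify_of_signed (hA u hu hu0) ?_
    by_cases hv0 : v = 0
    · simp [hv0]
    · exact (hA v hv hv0).elim Or.inl (Or.inr ∘ Or.inl)

/-- Corollary 3.8: a matrix contracting an ℝ-cone into (±) the interior of another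
maps the punctured complexification into the interior of the complexification. -/
theorem stmt14 {d : ℕ} (K₁ K₂ : Set (Fin d → ℝ)) (h₁ : IsRCone K₁) (h₂ : IsRCone K₂)
    (A : Matrix (Fin d) (Fin d) ℝ)
    (hA : ∀ u ∈ K₁, u ≠ 0 → A.mulVec u ∈ interior K₂ ∨ -A.mulVec u ∈ interior K₂) :
    ∀ z ∈ complexify K₁, z ≠ 0 → mulVecC A z ∈ interior (complexify K₂) :=
  stmt14_general K₁ K₂ A hA
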